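/- Let g ≥ 1 and let σ ∈ A_{4g} be a permutation whose disjoint cycle decomposition consists of 2g+2 cycles of (odd) lengths 2n_i + 1, i = 1,…,2g+2, with Σ n_i = g − 1 (including fixed points as 1-cycles). Then there exist 3-cycles τ_1, …, τ_{2g} in A_{4g} and the fixed involution ℓ = (1 2)(3 4)⋯(4g−1 4g) such that σ = (A ℓ)², where A = τ_1 τ_2 ⋯ τ_{2g}. -/

import Mathlib

/-- The fixed fixed-point-free involution `ℓ = (1 2)(3 4)⋯(4g−1 4g)` of `{1, …, 4g}`,
realized on `Fin (4*g)` (0-indexed: it swaps `2j ↔ 2j+1`). -/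
def ell (g : ℕ) : Equiv.Perm (Fin (4 * g)) :=
  Function.Involutive.toPerm
    (fun k => if _ : k.val % 2 = 0 then ⟨k.val + 1, by omega⟩ else ⟨k.val - 1, by omega⟩)
    (by
      intro k
      dsimp only
      split_ifs with h1 h2 h2
      · exfalso; revert h2; dsimp only; omega
      · apply Fin.ext; dsimp only; omega
      · apply Fin.ext; dsimp only; revert h2; dsimp only; omega
      · exfalso; revert h2; dsimp only; omega)

/-!
Every cycle of `σ` has odd length, so `σ` has odd order and is the square of one of its own
powers `X`, which is even. Since `ℓ` is an even involution, `A := X ℓ` is even and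
`(A ℓ)² = X² = σ`. An even permutation is a product of at most `#support / 2` 3-cycles: peel
off either a 3-cycle `(x, π x, π² x)`, which fixes two more points, or, when `π` is an
involution, a product `(a b)(d e)` of two 3-cycles, which fixes four. On `4g` points this gives
at most `2g` factors, and `τ = τ⁻¹ τ⁻¹` pads a nonempty product of 3-cycles to exactly `2g`.
-/

open Equiv Finset

namespace Equiv.Perm

variable {α : Type*} [DecidableEq α] [Fintype α]

theorem odd_orderOf_of_forall_mem_cycleType_odd {σ : Perm α} (h : ∀ k ∈ σ.cycleType, Odd k) :
    Odd (orderOf σ) := by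
  have hdvd : orderOf σ ∣ σ.cycleType.prod :=
    σ.lcm_cycleType ▸ Multiset.lcm_dvd.2 fun _ hk => Multiset.dvd_prod hk
  rw [← Nat.coprime_two_left]
  exact (Nat.coprime_multiset_prod_right_iff.2 fun k hk => Nat.coprime_two_left.2 (h k hk))
    |>.coprime_dvd_right hdvd

theorem IsThreeCycle.inv_mul_inv {τ : Perm α} (h : τ.IsThreeCycle) : τ⁻¹ * τ⁻¹ = τ := by
  rw [← mul_inv_rev, inv_eq_iff_mul_eq_one, ← pow_three', ← h.orderOf, pow_orderOf_eq_one]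

theorem sign_prod_of_forall_isThreeCycle {L : List (Perm α)} (h : ∀ τ ∈ L, τ.IsThreeCycle) :
    sign L.prod = 1 :=
  List.prod_induction (fun π => sign π = 1) (fun _ _ ha hb => by rw [map_mul, ha, hb, mul_one])
    (map_one _) fun τ hτ => (h τ hτ).sign

theorem card_support_inv_mul_add_card_le {π τ : Perm α} {s : Finset α}
    (hτ : τ.support ⊆ π.support) (hs : s ⊆ π.support) (hτπ : ∀ x ∈ s, τ x = π x) :
    #(τ⁻¹ * π).support + #s ≤ #π.support := by
  have hsub : (τ⁻¹ * π).support ⊆ π.support \ s := by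
    intro y hy
    refine mem_sdiff.2 ⟨?_, fun hys => mem_support.1 hy (inv_eq_iff_eq.2 (hτπ y hys).symm)⟩
    have hy' := support_mul_le τ⁻¹ π hy
    rw [support_inv] at hy'
    exact (mem_union.1 hy').elim (fun h => hτ h) id
  calc #(τ⁻¹ * π).support + #s ≤ #(π.support \ s) + #s := by gcongr
    _ = #π.support := card_sdiff_add_card_eq_card hs

theorem exists_isThreeCycle_card_support_inv_mul_add_two_le {π : Perm α} {x : α}
    (hx : π (π x) ≠ x) :
    ∃ τ : Perm α, τ.IsThreeCycle ∧ #(τ⁻¹ * π).support + 2 ≤ #π.support := by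
  have hxb : x ≠ π x := fun h => hx (by rw [← h, ← h])
  have hbc : π x ≠ π (π x) := fun h => hxb (π.injective h)
  have hmem : {x, π x, π (π x)} ⊆ π.support := by
    intro y hy
    simp only [mem_insert, mem_singleton] at hy
    rcases hy with rfl | rfl | rfl
    exacts [mem_support.2 hxb.symm, apply_mem_support.2 (mem_support.2 hxb.symm),
      apply_mem_support.2 (mem_support.2 hbc.symm)]
  refine ⟨swap x (π (π x)) * swap x (π x),
    isThreeCycle_swap_mul_swap_same hx.symm hxb hbc.symm, ?_⟩
  have h := card_support_inv_mul_add_card_le (π := π) (s := {x, π x})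
    (τ := swap x (π (π x)) * swap x (π x)) ?_ (subset_trans (by simp) hmem) ?_
  · rwa [card_pair hxb] at h
  · refine (support_mul_le _ _).trans fun y hy => hmem ?_
    simp only [support_swap hx.symm, support_swap hxb, sup_eq_union, mem_union, mem_insert,
      mem_singleton] at hy ⊢
    tauto
  · simp [swap_apply_of_ne_of_ne, hxb.symm, hbc]

/-- Being even, the involution `π` contains two disjoint transpositions `(a b)(d e)`, and
`(a b)(d e) = ((a b)(a d)) ((a d)(d e))`. -/
theorem exists_isThreeCycle_pair_card_support_add_four_le {π : Perm α}
    (hπ : ∀ x, π (π x) = x) (h1 : π ≠ 1) (hs : sign π = 1) :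
    ∃ τ₁ τ₂ : Perm α, τ₁.IsThreeCycle ∧ τ₂.IsThreeCycle ∧
      #((τ₁ * τ₂)⁻¹ * π).support + 4 ≤ #π.support := by
  have h2 : 2 ≤ #π.support := two_le_card_support_of_ne_one h1
  have h3 : 2 < #π.support := by
    refine lt_of_le_of_ne h2 fun h => ?_
    rw [(card_support_eq_two.1 h.symm).sign_eq] at hs
    exact absurd hs (by decide)
  obtain ⟨a, ha⟩ := card_pos.1 (by omega : 0 < #π.support)
  obtain ⟨d, hd, hdab⟩ :=
    exists_mem_notMem_of_card_lt_card ((card_le_two (a := a) (b := π a)).trans_lt h3)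
  obtain ⟨hda, hdb⟩ : d ≠ a ∧ d ≠ π a := by simpa [not_or] using hdab
  have hab : a ≠ π a := (mem_support.1 ha).symm
  have hde : d ≠ π d := (mem_support.1 hd).symm
  have hea : π d ≠ a := fun h => hdb (by rw [← h, hπ])
  have heb : π d ≠ π a := fun h => hda (π.injective h)
  refine ⟨swap a (π a) * swap a d, swap a d * swap d (π d),
    isThreeCycle_swap_mul_swap_same hab (Ne.symm hda) (Ne.symm hdb), ?_, ?_⟩
  · rw [swap_comm a d]
    exact isThreeCycle_swap_mul_swap_same hda hde hea.symm
  have hprod : swap a (π a) * swap a d * (swap a d * swap d (π d)) =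
      swap a (π a) * swap d (π d) := by
    simp only [mul_assoc, swap_mul_self_mul]
  have hmem : {a, π a, d, π d} ⊆ π.support := by
    intro y hy
    simp only [mem_insert, mem_singleton] at hy
    rcases hy with rfl | rfl | rfl | rfl
    exacts [ha, apply_mem_support.2 ha, hd, apply_mem_support.2 hd]
  have h := card_support_inv_mul_add_card_le (π := π)
    (τ := swap a (π a) * swap d (π d)) ?_ hmem ?_
  · rw [hprod]
    rwa [card_insert_of_notMem, card_insert_of_notMem, card_pair hde] at h
    · simp [hdb.symm, heb.symm]
    · simp [hab, hda.symm, hea.symm]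
  · refine (support_mul_le _ _).trans fun y hy => hmem ?_
    simp only [support_swap hab, support_swap hde, sup_eq_union, mem_union, mem_insert,
      mem_singleton] at hy ⊢
    tauto
  · simp [swap_apply_of_ne_of_ne, hπ, hda, hda.symm, hdb, hdb.symm, hea, hea.symm, heb]

theorem exists_list_isThreeCycle_card_support_inv_prod_mul_add_le {π : Perm α}
    (h1 : π ≠ 1) (hs : sign π = 1) :
    ∃ L : List (Perm α), L ≠ [] ∧ (∀ τ ∈ L, τ.IsThreeCycle) ∧
      #(L.prod⁻¹ * π).support + 2 * L.length ≤ #π.support := by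
  by_cases hπ : ∀ x, π (π x) = x
  · obtain ⟨τ₁, τ₂, h₁, h₂, h⟩ := exists_isThreeCycle_pair_card_support_add_four_le hπ h1 hs
    exact ⟨[τ₁, τ₂], by simp, by simp [h₁, h₂], by simpa using h⟩
  · obtain ⟨x, hx⟩ := not_forall.1 hπ
    obtain ⟨τ, hτ, h⟩ := exists_isThreeCycle_card_support_inv_mul_add_two_le hx
    exact ⟨[τ], by simp, by simp [hτ], by simpa using h⟩

theorem exists_list_isThreeCycle_prod_eq {π : Perm α} (hs : sign π = 1) :
    ∃ L : List (Perm α), (∀ τ ∈ L, τ.IsThreeCycle) ∧ L.prod = π ∧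
      2 * L.length ≤ #π.support := by
  induction hn : #π.support using Nat.strong_induction_on generalizing π with
  | _ n ih =>
  by_cases h1 : π = 1
  · exact ⟨[], by simp, by simp [h1], by simp⟩
  obtain ⟨L₀, hne, h₀, hcard⟩ := exists_list_isThreeCycle_card_support_inv_prod_mul_add_le h1 hs
  have hlen : 0 < L₀.length := List.length_pos_iff.2 hne
  obtain ⟨L, hL, hprod, hlen'⟩ := ih _ (by omega) (π := L₀.prod⁻¹ * π)
    (by rw [map_mul, map_inv, sign_prod_of_forall_isThreeCycle h₀, hs, inv_one, one_mul]) rfl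
  refine ⟨L₀ ++ L, fun τ hτ => (List.mem_append.1 hτ).elim (h₀ τ) (hL τ), ?_, ?_⟩
  · rw [List.prod_append, hprod, mul_inv_cancel_left]
  · rw [List.length_append]
    omega

theorem exists_list_isThreeCycle_length_eq_of_length_le {L : List (Perm α)} (hL : L ≠ [])
    (h : ∀ τ ∈ L, τ.IsThreeCycle) {k : ℕ} (hk : L.length ≤ k) :
    ∃ L' : List (Perm α), L'.length = k ∧ (∀ τ ∈ L', τ.IsThreeCycle) ∧ L'.prod = L.prod := by
  induction k, hk using Nat.le_induction with
  | base => exact ⟨L, rfl, h, rfl⟩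
  | succ k hk ih =>
    obtain ⟨L', hlen, h', hprod⟩ := ih
    have hL' : L' ≠ [] := by
      rintro rfl
      exact hL (List.length_eq_zero_iff.1 (by rw [List.length_nil] at hlen; omega))
    obtain ⟨τ, t, rfl⟩ := List.exists_cons_of_ne_nil hL'
    have hτ := h' τ List.mem_cons_self
    refine ⟨τ⁻¹ :: τ⁻¹ :: t, by simpa using hlen, ?_, ?_⟩
    · simp only [List.mem_cons]
      rintro σ (rfl | rfl | hσ)
      exacts [hτ.inv, hτ.inv, h' σ (List.mem_cons_of_mem _ hσ)]
    · rw [← hprod, List.prod_cons, List.prod_cons, List.prod_cons, ← mul_assoc, hτ.inv_mul_inv]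

theorem exists_list_isThreeCycle_length_eq_prod_eq {π : Perm α} (hs : sign π = 1) (h1 : π ≠ 1)
    {k : ℕ} (hk : #π.support ≤ 2 * k) :
    ∃ L : List (Perm α), L.length = k ∧ (∀ τ ∈ L, τ.IsThreeCycle) ∧ L.prod = π := by
  obtain ⟨L, h, hprod, hlen⟩ := exists_list_isThreeCycle_prod_eq hs
  have hL : L ≠ [] := by
    rintro rfl
    exact h1 hprod.symm
  obtain ⟨L', hlen', h', hprod'⟩ :=
    exists_list_isThreeCycle_length_eq_of_length_le hL h (k := k) (by omega)
  exact ⟨L', hlen', h', hprod'.trans hprod⟩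

end Equiv.Perm

open Equiv.Perm

theorem ell_mul_self (g : ℕ) : ell g * ell g = 1 :=
  Equiv.ext (Function.Involutive.toPerm_involutive _)

theorem ell_apply_ne (g : ℕ) (k : Fin (4 * g)) : ell g k ≠ k := by
  simp only [ell, Function.Involutive.toPerm, Equiv.coe_fn_mk, ne_eq, Fin.ext_iff]
  split_ifs <;> dsimp only <;> omega

theorem ell_ne_one {g : ℕ} (hg : 1 ≤ g) : ell g ≠ 1 := fun h =>
  ell_apply_ne g ⟨0, by omega⟩ (by rw [h]; rfl)

theorem sign_ell (g : ℕ) : sign (ell g) = 1 := by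
  have hfix : Fintype.card (Function.fixedPoints (ell g)) = 0 :=
    Fintype.card_eq_zero_iff.2 ⟨fun k => ell_apply_ne g k k.2⟩
  rw [sign_of_pow_two_eq_one (by rw [sq, ell_mul_self]), hfix, Fintype.card_fin,
    show (4 * g - 0) / 2 = 2 * g by omega]
  exact (even_two_mul g).neg_one_pow

theorem stmt_4_general (g : ℕ) (hg : 1 ≤ g) (n : Fin (2 * g + 2) → ℕ)
    (σ : Equiv.Perm (Fin (4 * g)))
    (hσ : σ ∈ alternatingGroup (Fin (4 * g)))
    (hcyc : σ.cycleType = (Finset.univ.val.map fun i => 2 * n i + 1).filter fun k => 1 < k) :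
    ∃ τ : Fin (2 * g) → Equiv.Perm (Fin (4 * g)),
      (∀ i, (τ i).IsThreeCycle) ∧ σ = ((List.ofFn τ).prod * ell g) ^ 2 := by
  have hodd : Odd (orderOf σ) := odd_orderOf_of_forall_mem_cycleType_odd fun k hk => by
    rw [hcyc] at hk
    obtain ⟨i, -, rfl⟩ := Multiset.mem_map.1 (Multiset.mem_filter.1 hk).1
    exact odd_two_mul_add_one _
  obtain ⟨m, hm⟩ := exists_pow_eq_self_of_coprime (Nat.coprime_two_left.2 hodd)
  have hsq : (σ ^ m) ^ 2 = σ := by rw [pow_right_comm, hm]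
  have hsign : sign (σ ^ m * ell g) = 1 := by
    rw [map_mul, map_pow, mem_alternatingGroup.1 hσ, one_pow, sign_ell, mul_one]
  have hne : σ ^ m * ell g ≠ 1 := by
    intro h
    have hX : σ ^ m = ell g := by
      rw [mul_eq_one_iff_eq_inv.1 h, inv_eq_of_mul_eq_one_right (ell_mul_self g)]
    have hσ1 : σ = 1 := by rw [← hsq, hX, sq, ell_mul_self]
    exact ell_ne_one hg (by rw [← hX, hσ1, one_pow])
  obtain ⟨L, hlen, h3, hprod⟩ := exists_list_isThreeCycle_length_eq_prod_eq hsign hne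
    (k := 2 * g) ((card_le_univ _).trans (by rw [Fintype.card_fin]; omega))
  refine ⟨fun i => L[i.val], fun i => h3 _ (List.getElem_mem _), ?_⟩
  rw [show List.ofFn (fun i : Fin (2 * g) => L[i.val]) = L from
    List.ext_getElem (by simp [hlen]) (by simp), hprod, mul_assoc, ell_mul_self, mul_one, hsq]

/-- Let `g ≥ 1` and `σ ∈ A_{4g}` a permutation whose disjoint cycle decomposition
consists of `2g+2` cycles of odd lengths `2nᵢ+1` with `Σ nᵢ = g−1` (fixed points counted
as 1-cycles).  Then there are `2g` three-cycles `τ₁, …, τ_{2g}` such that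
`σ = (A ℓ)²` with `A = τ₁ ⋯ τ_{2g}` and `ℓ = (1 2)(3 4)⋯(4g−1 4g)`. -/
theorem stmt_4 (g : ℕ) (hg : 1 ≤ g) (n : Fin (2 * g + 2) → ℕ)
    (hsum : ∑ i, n i = g - 1) (σ : Equiv.Perm (Fin (4 * g)))
    (hσ : σ ∈ alternatingGroup (Fin (4 * g)))
    (hcyc : σ.cycleType = (Finset.univ.val.map fun i => 2 * n i + 1).filter fun k => 1 < k) :
    ∃ τ : Fin (2 * g) → Equiv.Perm (Fin (4 * g)),
      (∀ i, (τ i).IsThreeCycle) ∧ σ = ((List.ofFn τ).prod * ell g) ^ 2 :=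
  stmt_4_general g hg n σ hσ hcyc
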